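/- arXiv:2308.13395 — 4 statements merged into one kernel-verified Lean document; each statement's English description precedes it below -/
import Mathlib

section
/- Let f ∈ R = A[X; θ, δ] be monic of degree n with f = h·g = g·ħ where the leading coefficient of ħ is invertible in A (so that ħ is not a left zero divisor in R). Then a polynomial w ∈ R of degree < n satisfies: the coset of w lies in the code 𝒞 = Rg/Rf if and only if w·ħ ∈ Rf, i.e., w·ħ ≡ 0 in R/Rf. -/
/-- The skew polynomial ring `R = A[X; θ, δ]`: a ring `R` together with a coefficient
embedding `C : A →+* R` and an indeterminate `X` satisfying the commutation rule
`X * C a = C (θ a) * X + C (δ a)`, such that every element of `R` is, in a unique way,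
a left polynomial `Σᵢ C aᵢ * X ^ i`. -/
structure SkewPolyRing (A : Type*) [Ring A] (θ : A →+* A) (δ : A →+ A)
    (R : Type*) [Ring R] where
  /-- embedding of the coefficient ring -/
  C : A →+* R
  /-- the indeterminate -/
  X : R
  /-- the commutation rule `X·a = θ(a)·X + δ(a)` -/
  X_mul : ∀ a : A, X * C a = C (θ a) * X + C (δ a)
  /-- every element of `R` is uniquely a left polynomial in `X` -/
  equiv : (ℕ →₀ A) ≃ R
  equiv_apply : ∀ p : ℕ →₀ A, equiv p = p.sum fun i a => C a * X ^ i

namespace SkewPolyRing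

variable {A : Type*} [Ring A] {θ : A →+* A} {δ : A →+ A} {R : Type*} [Ring R]

/-- the `i`-th coefficient of a skew polynomial -/
noncomputable def coeff (S : SkewPolyRing A θ δ R) (f : R) (i : ℕ) : A :=
  S.equiv.symm f i

/-- the degree of a skew polynomial (the degree of `0` is `⊥ = -∞`) -/
noncomputable def deg (S : SkewPolyRing A θ δ R) (f : R) : WithBot ℕ :=
  (S.equiv.symm f).support.max

/-- the degree of a skew polynomial, as a natural number -/
noncomputable def natDeg (S : SkewPolyRing A θ δ R) (f : R) : ℕ :=
  WithBot.unbotD 0 (S.deg f)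

/-- the leading coefficient of a skew polynomial -/
noncomputable def lc (S : SkewPolyRing A θ δ R) (f : R) : A :=
  S.coeff f (S.natDeg f)

end SkewPolyRing

/-!
Writing `w * ħ = q * f = q * g * ħ` reduces the theorem to `ħ` being right regular. That holds
because the coefficient of `x * y` in degree `deg x + deg y` is `lc x * θ^(deg x) (lc y)`: when
`lc y` is a unit so is its image under the ring endomorphism `θ^(deg x)`, so `x * y ≠ 0`
whenever `x ≠ 0`.
-/

namespace SkewPolyRing

variable {A : Type*} [Ring A] {θ : A →+* A} {δ : A →+ A} {R : Type*} [Ring R]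
variable (S : SkewPolyRing A θ δ R)

noncomputable def addEquiv : (ℕ →₀ A) ≃+ R where
  toEquiv := S.equiv
  map_add' p q := by
    simp only [Equiv.toFun_as_coe, S.equiv_apply]
    exact Finsupp.sum_add_index' (fun _ => by simp) (fun _ _ _ => by rw [map_add, add_mul])

noncomputable def coeffAddHom (k : ℕ) : R →+ A :=
  (Finsupp.applyAddHom k).comp S.addEquiv.symm.toAddMonoidHom

theorem equiv_add (p q : ℕ →₀ A) : S.equiv (p + q) = S.equiv p + S.equiv q :=
  map_add S.addEquiv p q

theorem equiv_zero : S.equiv 0 = 0 :=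
  map_zero S.addEquiv

theorem coeff_zero (k : ℕ) : S.coeff 0 k = 0 :=
  map_zero (S.coeffAddHom k)

theorem coeff_sum {ι : Type*} (s : Finset ι) (F : ι → R) (k : ℕ) :
    S.coeff (∑ i ∈ s, F i) k = ∑ i ∈ s, S.coeff (F i) k :=
  map_sum (S.coeffAddHom k) F s

theorem sum_C_mul_X_pow (x : R) :
    ((S.equiv.symm x).sum fun i a => S.C a * S.X ^ i) = x := by
  rw [← S.equiv_apply, Equiv.apply_symm_apply]

theorem coeff_C_mul (a : A) (x : R) (k : ℕ) :
    S.coeff (S.C a * x) k = a * S.coeff x k := by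
  have key : S.C a * x = S.equiv ((S.equiv.symm x).mapRange (a * ·) (mul_zero a)) := by
    conv_lhs => rw [← S.sum_C_mul_X_pow x]
    rw [S.equiv_apply, Finsupp.mul_sum, Finsupp.sum_mapRange_index (fun _ => by simp)]
    exact Finsupp.sum_congr fun i _ => by rw [← mul_assoc, ← map_mul]
  rw [coeff, key, Equiv.symm_apply_apply, Finsupp.mapRange_apply, coeff]

/-- The commutation rule `X * C a = C (θ a) * X + C (δ a)`, applied termwise. -/
theorem X_mul_eq (x : R) :
    S.X * x = S.equiv
      (Finsupp.embDomain ⟨Nat.succ, Nat.succ_injective⟩ ((S.equiv.symm x).mapRange θ θ.map_zero)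
        + (S.equiv.symm x).mapRange δ δ.map_zero) := by
  conv_lhs => rw [← S.sum_C_mul_X_pow x]
  rw [equiv_add, S.equiv_apply, S.equiv_apply, Finsupp.mul_sum, Finsupp.sum_embDomain,
    Finsupp.sum_mapRange_index (fun _ => by simp), Finsupp.sum_mapRange_index (fun _ => by simp),
    ← Finsupp.sum_add]
  refine Finsupp.sum_congr fun i _ => ?_
  rw [← mul_assoc, S.X_mul, add_mul, mul_assoc, ← pow_succ']
  rfl

theorem coeff_X_mul_succ (x : R) (k : ℕ) :
    S.coeff (S.X * x) (k + 1) = θ (S.coeff x k) + δ (S.coeff x (k + 1)) := by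
  rw [coeff, X_mul_eq, Equiv.symm_apply_apply, Finsupp.add_apply]
  have : (k + 1 : ℕ) = (⟨Nat.succ, Nat.succ_injective⟩ : ℕ ↪ ℕ) k := rfl
  rw [this, Finsupp.embDomain_apply_self, Finsupp.mapRange_apply, Finsupp.mapRange_apply]
  rfl

theorem deg_le_iff_coeff_eq_zero {x : R} {d : ℕ} :
    S.deg x ≤ d ↔ ∀ k, d < k → S.coeff x k = 0 := by
  constructor
  · intro hx k hk
    by_contra hc
    have : (k : WithBot ℕ) ≤ d := (Finset.le_max (Finsupp.mem_support_iff.mpr hc)).trans hx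
    exact absurd (WithBot.coe_le_coe.mp this) (not_le.mpr hk)
  · intro hx
    refine Finset.max_le fun k hk => WithBot.coe_le_coe.mpr ?_
    by_contra hc
    exact Finsupp.mem_support_iff.mp hk (hx k (not_le.mp hc))

theorem deg_le_natDeg (x : R) : S.deg x ≤ S.natDeg x := by
  cases hd : S.deg x with
  | bot => exact bot_le
  | coe m => rw [natDeg, hd]; rfl

theorem deg_X_mul_le {x : R} {d : ℕ} (hx : S.deg x ≤ d) : S.deg (S.X * x) ≤ (d + 1 : ℕ) := by
  rw [deg_le_iff_coeff_eq_zero] at hx ⊢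
  rintro (_ | k) hk
  · omega
  · rw [coeff_X_mul_succ, hx k (by omega), hx (k + 1) (by omega), map_zero, map_zero, add_zero]

theorem coeff_X_mul_of_deg_le {x : R} {d : ℕ} (hx : S.deg x ≤ d) :
    S.coeff (S.X * x) (d + 1) = θ (S.coeff x d) := by
  rw [coeff_X_mul_succ, S.deg_le_iff_coeff_eq_zero.mp hx (d + 1) d.lt_succ_self, map_zero,
    add_zero]

theorem deg_X_pow_mul_le {x : R} {d : ℕ} (hx : S.deg x ≤ d) (i : ℕ) :
    S.deg (S.X ^ i * x) ≤ (i + d : ℕ) := by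
  induction i with
  | zero => simpa using hx
  | succ i ih =>
    rw [pow_succ', mul_assoc, Nat.add_right_comm]
    exact S.deg_X_mul_le ih

theorem coeff_X_pow_mul_of_deg_le {x : R} {d : ℕ} (hx : S.deg x ≤ d) (i : ℕ) :
    S.coeff (S.X ^ i * x) (i + d) = (θ ^ i) (S.coeff x d) := by
  induction i with
  | zero => simp
  | succ i ih =>
    rw [pow_succ', mul_assoc, Nat.add_right_comm,
      S.coeff_X_mul_of_deg_le (S.deg_X_pow_mul_le hx i), ih, pow_succ' θ i]
    rfl

/-- Only the summand `C (coeff x m) * X ^ m * y` of `x * y` reaches degree `m + d`. -/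
theorem coeff_mul_of_deg_le {x y : R} {m d : ℕ} (hx : S.deg x ≤ m) (hy : S.deg y ≤ d) :
    S.coeff (x * y) (m + d) = S.coeff x m * (θ ^ m) (S.coeff y d) := by
  have hexpand : x * y = (S.equiv.symm x).sum fun i a => S.C a * (S.X ^ i * y) := by
    conv_lhs => rw [← S.sum_C_mul_X_pow x, Finsupp.sum_mul]
    exact Finsupp.sum_congr fun i _ => by rw [mul_assoc]
  rw [hexpand, Finsupp.sum, coeff_sum, Finset.sum_eq_single m]
  · rw [coeff_C_mul, S.coeff_X_pow_mul_of_deg_le hy]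
    rfl
  · intro i hi him
    have hle : (i : WithBot ℕ) ≤ m := (Finset.le_max hi).trans hx
    have hlt : i < m := lt_of_le_of_ne (WithBot.coe_le_coe.mp hle) him
    rw [coeff_C_mul, S.deg_le_iff_coeff_eq_zero.mp (S.deg_X_pow_mul_le hy i) _ (by omega),
      mul_zero]
  · intro hm
    rw [coeff_C_mul, show (S.equiv.symm x) m = 0 from Finsupp.notMem_support_iff.mp hm, zero_mul]

theorem coeff_mul_natDeg_add_natDeg (x y : R) :
    S.coeff (x * y) (S.natDeg x + S.natDeg y) = S.lc x * (θ ^ S.natDeg x) (S.lc y) :=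
  S.coeff_mul_of_deg_le (S.deg_le_natDeg x) (S.deg_le_natDeg y)

theorem lc_ne_zero {x : R} (hx : x ≠ 0) : S.lc x ≠ 0 := by
  have hsupp : (S.equiv.symm x).support.Nonempty := by
    rw [Finsupp.support_nonempty_iff, Ne, Equiv.symm_apply_eq, equiv_zero]
    exact hx
  obtain ⟨m, hm⟩ := Finset.max_of_nonempty hsupp
  have hdeg : S.natDeg x = m := by rw [natDeg, deg, hm]; rfl
  rw [lc, hdeg]
  exact Finsupp.mem_support_iff.mp (Finset.mem_of_max hm)

theorem isRightRegular_of_isUnit_lc {y : R} (hy : IsUnit (S.lc y)) : IsRightRegular y := by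
  refine isRightRegular_iff_left_eq_zero_of_mul.mpr fun x hxy => ?_
  by_contra hx
  have htop := S.coeff_mul_natDeg_add_natDeg x y
  rw [hxy, coeff_zero, eq_comm, (hy.map (θ ^ S.natDeg x)).mul_left_eq_zero] at htop
  exact S.lc_ne_zero hx htop

end SkewPolyRing

theorem mem_code_iff_mul_hbar_mem_general
    {A R : Type*} [Ring A] [Ring R]
    (θ : A →+* A) (δ : A →+ A)
    (S : SkewPolyRing A θ δ R)
    (f g hbar : R) (n : ℕ)
    (h2 : f = g * hbar)
    (hlc : IsUnit (S.lc hbar)) :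
    ∀ w : R, S.deg w < (n : WithBot ℕ) →
      ((∃ u : R, w = u * g) ↔ ∃ q : R, w * hbar = q * f) := by
  intro w _
  constructor
  · rintro ⟨u, rfl⟩
    exact ⟨u, by rw [mul_assoc, h2]⟩
  · rintro ⟨q, hq⟩
    refine ⟨q, S.isRightRegular_of_isUnit_lc hlc ?_⟩
    simp only [hq, h2, mul_assoc]

/-- Let `f ∈ R = A[X; θ, δ]` be monic of degree `n` with
`f = h * g = g * ħ` where the leading coefficient of `ħ` is invertible in `A`.
Then a polynomial `w` of degree `< n` represents a codeword of `𝒞 = Rg/Rf`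
(i.e. `w ∈ Rg`) if and only if `w * ħ ∈ Rf`, i.e. `w * ħ ≡ 0` in `R/Rf`. -/
theorem mem_code_iff_mul_hbar_mem
    {A R : Type*} [Ring A] [Nontrivial A] [Ring R]
    (θ : A →+* A) (δ : A →+ A)
    (hδ : ∀ a b : A, δ (a * b) = δ a * b + θ a * δ b)
    (S : SkewPolyRing A θ δ R)
    (f g h hbar : R) (n : ℕ)
    (hdegf : S.deg f = (n : WithBot ℕ)) (hmf : S.coeff f n = 1)
    (h1 : f = h * g) (h2 : f = g * hbar)
    (hlc : IsUnit (S.lc hbar)) :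
    ∀ w : R, S.deg w < (n : WithBot ℕ) →
      ((∃ u : R, w = u * g) ↔ ∃ q : R, w * hbar = q * f) :=
  mem_code_iff_mul_hbar_mem_general θ δ S f g hbar n h2 hlc
end

section
/- Let A be a finite ring, B ⊆ A a subring such that A is a free B-module with basis a₁, …, a_s, and let θ be a unitary endomorphism of A and δ a θ-derivation of A such that θ(B) ⊆ B, δ(B) ⊆ B, and the restrictions θ|_B and δ|_B are polynomial maps on B. Then there exist multivariate polynomials P₁, …, P_s and Q₁, …, Q_s in B[Y₁, …, Y_s] such that for all y₁, …, y_s ∈ B: θ(Σⱼ yⱼaⱼ) = Σⱼ Pⱼ(y₁,…,y_s)·aⱼ and δ(Σⱼ yⱼaⱼ) = Σⱼ Qⱼ(y₁,…,y_s)·aⱼ. -/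
/-! Since `θ` is multiplicative and `δ` obeys the twisted Leibniz rule, both are determined on
`Σ yⱼ aⱼ` by their values on the coordinates `yⱼ ∈ B` and on the basis vectors `aⱼ`. Writing
`θ(aⱼ) = Σₖ cⱼₖ aₖ` and `δ(aⱼ) = Σₖ dⱼₖ aₖ`, the `k`-th coordinate of `θ(Σ yⱼ aⱼ)` is
`Σⱼ pθ(yⱼ) cⱼₖ`, and that of `δ(Σ yⱼ aⱼ)` is `pδ(yₖ) + Σⱼ pθ(yⱼ) dⱼₖ`: polynomials in `y`. -/

open MvPolynomial

theorem MvPolynomial.eval_aeval_X {R σ : Type*} [CommSemiring R] (p : Polynomial R)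
    (y : σ → R) (j : σ) : eval y (Polynomial.aeval (X j : MvPolynomial σ R) p) = p.eval (y j) := by
  rw [← aeval_eq_eval, ← Polynomial.aeval_algHom_apply, aeval_X, Polynomial.coe_aeval_eq_eval]

section Coordinates

variable {A ι : Type*} [CommRing A] [Fintype ι] {B : Subring A} (a : ι → A)

theorem sum_mul_sum_coord_mul (u : ι → B) (c : ι → ι → B) :
    ∑ j, (u j : A) * ∑ k, (c j k : A) * a k = ∑ k, ((∑ j, u j * c j k : B) : A) * a k := by
  push_cast
  simp only [Finset.mul_sum, Finset.sum_mul, mul_assoc]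
  exact Finset.sum_comm

theorem RingHom.map_sum_coord_mul (θ : A →+* A) (f : B → B) (hf : ∀ b : B, θ b = f b)
    (c : ι → ι → B) (hc : ∀ j, θ (a j) = ∑ k, (c j k : A) * a k) (y : ι → B) :
    θ (∑ j, (y j : A) * a j) = ∑ k, ((∑ j, f (y j) * c j k : B) : A) * a k := by
  simp only [map_sum, map_mul, hf, hc, sum_mul_sum_coord_mul]

theorem AddMonoidHom.map_sum_coord_mul_of_twisted_leibniz (θ : A →+* A) (δ : A →+ A)
    (hδ : ∀ x y : A, δ (x * y) = δ x * y + θ x * δ y) (f g : B → B) (hf : ∀ b : B, θ b = f b)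
    (hg : ∀ b : B, δ b = g b) (d : ι → ι → B) (hd : ∀ j, δ (a j) = ∑ k, (d j k : A) * a k)
    (y : ι → B) :
    δ (∑ j, (y j : A) * a j) = ∑ k, ((g (y k) + ∑ j, f (y j) * d j k : B) : A) * a k := by
  simp only [map_sum, hδ, hf, hg, hd, Finset.sum_add_distrib, sum_mul_sum_coord_mul,
    Subring.coe_add, add_mul]

end Coordinates

theorem theta_delta_are_polynomial_in_coordinates_general
    {A : Type*} [CommRing A] (B : Subring A) (s : ℕ)
    (a : Fin s → A)
    (hbasis : ∀ x : A, ∃! y : Fin s → B, x = ∑ j, (y j : A) * a j)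
    (θ : A →+* A) (δ : A →+ A)
    (hδ : ∀ x y : A, δ (x * y) = δ x * y + θ x * δ y)
    (pθ : Polynomial B) (hpθ : ∀ b : B, θ (b : A) = ((Polynomial.eval b pθ : B) : A))
    (pδ : Polynomial B) (hpδ : ∀ b : B, δ (b : A) = ((Polynomial.eval b pδ : B) : A)) :
    ∃ P Q : Fin s → MvPolynomial (Fin s) B,
      ∀ y : Fin s → B,
        θ (∑ j, (y j : A) * a j)
            = ∑ j, ((MvPolynomial.eval y (P j) : B) : A) * a j ∧
        δ (∑ j, (y j : A) * a j)
            = ∑ j, ((MvPolynomial.eval y (Q j) : B) : A) * a j := by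
  choose c hc _ using fun j => hbasis (θ (a j))
  choose d hd _ using fun j => hbasis (δ (a j))
  refine ⟨fun k => ∑ j, Polynomial.aeval (X j) pθ * C (c j k),
    fun k => Polynomial.aeval (X k) pδ + ∑ j, Polynomial.aeval (X j) pθ * C (d j k),
    fun y => ⟨?_, ?_⟩⟩
  · rw [θ.map_sum_coord_mul a _ hpθ c hc]
    simp [eval_aeval_X]
  · rw [δ.map_sum_coord_mul_of_twisted_leibniz a θ hδ _ _ hpθ hpδ d hd]
    simp [eval_aeval_X]

/-- Let `A` be a finite (commutative) ring, `B ⊆ A` a subring such that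
`A` is a free `B`-module with basis `a₁, …, a_s`, and let `θ` be a unitary endomorphism
and `δ` a `θ`-derivation of `A` with `θ(B) ⊆ B`, `δ(B) ⊆ B` whose restrictions to `B` are
polynomial maps. Then there are multivariate polynomials `P₁, …, P_s, Q₁, …, Q_s` over
`B` such that `θ(Σ yⱼ aⱼ) = Σ Pⱼ(y) aⱼ` and `δ(Σ yⱼ aⱼ) = Σ Qⱼ(y) aⱼ` for all
`y₁, …, y_s ∈ B`. -/
theorem theta_delta_are_polynomial_in_coordinates
    {A : Type*} [CommRing A] [Finite A] (B : Subring A) (s : ℕ)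
    (a : Fin s → A)
    (hbasis : ∀ x : A, ∃! y : Fin s → B, x = ∑ j, (y j : A) * a j)
    (θ : A →+* A) (δ : A →+ A)
    (hδ : ∀ x y : A, δ (x * y) = δ x * y + θ x * δ y)
    (hθB : ∀ b ∈ B, θ b ∈ B) (hδB : ∀ b ∈ B, δ b ∈ B)
    (pθ : Polynomial B) (hpθ : ∀ b : B, θ (b : A) = ((Polynomial.eval b pθ : B) : A))
    (pδ : Polynomial B) (hpδ : ∀ b : B, δ (b : A) = ((Polynomial.eval b pδ : B) : A)) :
    ∃ P Q : Fin s → MvPolynomial (Fin s) B,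
      ∀ y : Fin s → B,
        θ (∑ j, (y j : A) * a j)
            = ∑ j, ((MvPolynomial.eval y (P j) : B) : A) * a j ∧
        δ (∑ j, (y j : A) * a j)
            = ∑ j, ((MvPolynomial.eval y (Q j) : B) : A) * a j :=
  theta_delta_are_polynomial_in_coordinates_general B s a hbasis θ δ hδ pθ hpθ pδ hpδ
end

section
/- Let A = 𝔽₂[u]/(u²) and let δ : A → A be the (Id-)derivation determined by δ(1) = 0 and δ(u) = 1, i.e., δ(α + βu) = β for α, β ∈ 𝔽₂ (formal differentiation with respect to u). Then δ is an additive map satisfying δ(ab) = δ(a)b + aδ(b) for all a, b ∈ A, but δ is not a polynomial map on A: there is no polynomial p ∈ A[x] with p evaluated at a equal to δ(a) for all a ∈ A. -/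
/-!
Formal differentiation `d/du` preserves the ideal `(u^n)` of `R[u]` when `n = 0` in `R`, since
`(u^n g)' = n u^(n-1) g + u^n g'`; hence it descends to a derivation `δ` of `R[u]/(u^n)` with
`δ u = 1`. No polynomial `p` can evaluate to such a `δ` when `n ≥ 1` and `R ≠ 0`: `u - 0` divides
`p(u) - p(0) = 1`, which would make the nilpotent `u` a unit.
-/

/-- The commutative local ring `A = 𝔽₂[u]/(u²)` of order 4. -/
abbrev FourRingU : Type :=
  Polynomial (ZMod 2) ⧸ Ideal.span ({Polynomial.X ^ 2} : Set (Polynomial (ZMod 2)))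

/-- The element `u` of `𝔽₂[u]/(u²)`. -/
noncomputable def uElt : FourRingU := Ideal.Quotient.mk _ Polynomial.X

open Polynomial

theorem not_exists_eval_eq_of_isNilpotent_sub {A : Type*} [CommRing A] [Nontrivial A]
    {f : A → A} {a b : A} (hab : IsNilpotent (a - b)) (hf : IsUnit (f a - f b)) :
    ¬ ∃ p : A[X], ∀ x, p.eval x = f x := by
  rintro ⟨p, hp⟩
  have hdvd := sub_dvd_eval_sub a b p
  rw [hp, hp] at hdvd
  exact hab.not_isUnit (isUnit_of_dvd_unit hdvd hf)

namespace Polynomial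

variable {R : Type*} [CommRing R] {n : ℕ}

theorem nontrivial_quotient_span_X_pow [Nontrivial R] (hn : n ≠ 0) :
    Nontrivial (R[X] ⧸ Ideal.span {(X : R[X]) ^ n}) := by
  rw [Ideal.Quotient.nontrivial_iff, Ne, Ideal.span_singleton_eq_top, isUnit_pow_iff hn]
  exact not_isUnit_X

theorem isNilpotent_mk_X : IsNilpotent (Ideal.Quotient.mk (Ideal.span {(X : R[X]) ^ n}) X) :=
  ⟨n, by rw [← map_pow, Ideal.Quotient.eq_zero_iff_mem]; exact Ideal.mem_span_singleton_self _⟩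

theorem derivative_mem_span_X_pow (hn : (n : R) = 0) {f : R[X]}
    (hf : f ∈ Ideal.span {(X : R[X]) ^ n}) : derivative f ∈ Ideal.span {(X : R[X]) ^ n} := by
  obtain ⟨g, rfl⟩ := Ideal.mem_span_singleton.mp hf
  rw [derivative_mul, derivative_X_pow, hn, C_0, zero_mul, zero_mul, zero_add]
  exact Ideal.mul_mem_right _ _ (Ideal.mem_span_singleton_self _)

variable (R n) in
noncomputable def truncDerivative (hn : (n : R) = 0) :
    R[X] ⧸ Ideal.span {(X : R[X]) ^ n} →+ R[X] ⧸ Ideal.span {(X : R[X]) ^ n} :=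
  QuotientAddGroup.lift _
    ((Ideal.Quotient.mk _ : R[X] →+* _).toAddMonoidHom.comp derivative.toAddMonoidHom)
    fun _ hf ↦ Ideal.Quotient.eq_zero_iff_mem.mpr (derivative_mem_span_X_pow hn hf)

variable (hn : (n : R) = 0)

@[simp]
theorem truncDerivative_mk (f : R[X]) :
    truncDerivative R n hn (Ideal.Quotient.mk _ f) = Ideal.Quotient.mk _ (derivative f) :=
  rfl

theorem truncDerivative_mk_X : truncDerivative R n hn (Ideal.Quotient.mk _ X) = 1 := by
  rw [truncDerivative_mk, derivative_X, map_one]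

theorem truncDerivative_mul (a b : R[X] ⧸ Ideal.span {(X : R[X]) ^ n}) :
    truncDerivative R n hn (a * b) =
      truncDerivative R n hn a * b + a * truncDerivative R n hn b := by
  obtain ⟨f, rfl⟩ := Ideal.Quotient.mk_surjective a
  obtain ⟨g, rfl⟩ := Ideal.Quotient.mk_surjective b
  simp only [← map_mul, truncDerivative_mk, derivative_mul, map_add]

end Polynomial

/-- On `A = 𝔽₂[u]/(u²)` there is an additive map `δ` with `δ(u) = 1`
(formal differentiation with respect to `u`, i.e. `δ(α + βu) = β`) which is a derivation,
`δ(ab) = δ(a)b + aδ(b)`, but which is not a polynomial map on `A`: no polynomial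
`p ∈ A[x]` evaluates to `δ` on all of `A`. -/
theorem derivation_not_polynomial_map :
    ∃ δ : FourRingU →+ FourRingU,
      δ uElt = 1 ∧
      (∀ a b : FourRingU, δ (a * b) = δ a * b + a * δ b) ∧
      ¬ ∃ p : Polynomial FourRingU, ∀ a : FourRingU, Polynomial.eval a p = δ a := by
  have two_eq_zero : ((2 : ℕ) : ZMod 2) = 0 := rfl
  have δ_u : truncDerivative (ZMod 2) 2 two_eq_zero uElt = 1 := truncDerivative_mk_X two_eq_zero
  have := nontrivial_quotient_span_X_pow (R := ZMod 2) two_ne_zero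
  refine ⟨truncDerivative (ZMod 2) 2 two_eq_zero, δ_u, truncDerivative_mul two_eq_zero, ?_⟩
  have u_nilpotent : IsNilpotent (uElt - 0) := (sub_zero uElt).symm ▸ isNilpotent_mk_X
  exact not_exists_eval_eq_of_isNilpotent_sub u_nilpotent (by simp [δ_u])
end

section
/- Let A = 𝔽₂[v]/(v² + v). For every unitary ring endomorphism θ of A and every θ-derivation δ of A, the derivation δ is inner: there exists β ∈ A such that δ(x) = βx − θ(x)β for all x ∈ A. -/
/-! The elements `x` with `δ x = β x - θ(x) β` form a subring, by the Leibniz rule. Since `A` is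
generated by `v`, it suffices to find `β` that works for `v`, and `β = δ v` does: applying the
Leibniz rule to `v = v²` gives `δ v = δ v · v + θ(v) δ v`, and `+ = -` in characteristic 2. -/

/-- The commutative ring `A = 𝔽₂[v]/(v² + v)` of order 4. -/
abbrev FourRingV : Type :=
  Polynomial (ZMod 2) ⧸ Ideal.span ({Polynomial.X ^ 2 + Polynomial.X} : Set (Polynomial (ZMod 2)))

open Polynomial

section InnerLocus

variable {R : Type*} [Ring R] (θ : R →+* R) (δ : R →+ R)

def innerLocus (hδ : ∀ a b : R, δ (a * b) = δ a * b + θ a * δ b) (β : R) : Subring R where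
  carrier := {x | δ x = β * x - θ x * β}
  zero_mem' := by simp
  one_mem' := by
    have h1 : δ 1 = 0 := by simpa using hδ 1 1
    simp [h1]
  add_mem' := by
    intro x y hx hy
    simp only [Set.mem_ofPred_eq, map_add] at hx hy ⊢
    rw [hx, hy]
    noncomm_ring
  mul_mem' := by
    intro x y hx hy
    simp only [Set.mem_ofPred_eq, map_mul] at hx hy ⊢
    rw [hδ, hx, hy]
    noncomm_ring
  neg_mem' := by
    intro x hx
    simp only [Set.mem_ofPred_eq, map_neg] at hx ⊢
    rw [hx]
    noncomm_ring

theorem mem_innerLocus_of_isIdempotentElem (h2 : (2 : R) = 0)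
    (hδ : ∀ a b : R, δ (a * b) = δ a * b + θ a * δ b) {e : R} (he : IsIdempotentElem e) :
    e ∈ innerLocus θ δ hδ (δ e) := by
  have hneg : ∀ x : R, -x = x := fun x => by
    rw [neg_eq_iff_add_eq_zero, ← two_mul, h2, zero_mul]
  show δ e = δ e * e - θ e * δ e
  conv_lhs => rw [← he.eq, hδ]
  rw [sub_eq_add_neg, hneg]

end InnerLocus

theorem Subring.eq_top_of_map_X_mem {n : ℕ} {R : Type*} [Ring R] (f : (ZMod n)[X] →+* R)
    (hf : Function.Surjective f) (S : Subring R) (hX : f X ∈ S) : S = ⊤ := by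
  refine eq_top_iff.mpr ?_
  rintro y -
  obtain ⟨p, rfl⟩ := hf y
  induction p using Polynomial.induction_on with
  | C a =>
    rw [← ZMod.intCast_zmod_cast a, map_intCast, map_intCast]
    exact intCast_mem S _
  | add p q hp hq => rw [map_add]; exact S.add_mem hp hq
  | monomial k a ih =>
    rw [pow_succ, ← mul_assoc, map_mul]
    exact S.mul_mem ih hX

theorem two_eq_zero_fourRingV : (2 : FourRingV) = 0 := by
  rw [← map_ofNat (algebraMap (ZMod 2) FourRingV) 2, show (2 : ZMod 2) = 0 from rfl, map_zero]

theorem isIdempotentElem_mk_X_fourRingV :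
    IsIdempotentElem (Ideal.Quotient.mk _ X : FourRingV) := by
  have h2 : (2 : (ZMod 2)[X]) = 0 := by
    exact CharP.ofNat_eq_zero (ZMod 2)[X] 2
  rw [IsIdempotentElem, ← map_mul, Ideal.Quotient.eq]
  refine Ideal.mem_span_singleton.mpr ⟨1, ?_⟩
  linear_combination (-X) * h2

/-- For every unitary ring endomorphism `θ` of `A = 𝔽₂[v]/(v² + v)` and
every `θ`-derivation `δ` of `A`, the derivation `δ` is inner: there is `β ∈ A` with
`δ(x) = βx − θ(x)β` for all `x ∈ A`. -/
theorem every_derivation_inner_F2v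
    (θ : FourRingV →+* FourRingV) (δ : FourRingV →+ FourRingV)
    (hδ : ∀ a b : FourRingV, δ (a * b) = δ a * b + θ a * δ b) :
    ∃ β : FourRingV, ∀ x : FourRingV, δ x = β * x - θ x * β := by
  have hv := mem_innerLocus_of_isIdempotentElem θ δ two_eq_zero_fourRingV hδ
    isIdempotentElem_mk_X_fourRingV
  have htop := Subring.eq_top_of_map_X_mem _ Ideal.Quotient.mk_surjective _ hv
  exact ⟨_, (Subring.eq_top_iff' _).mp htop⟩
end
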